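/- arXiv:2211.11088 — 3 statements merged into one kernel-verified Lean document; each statement's English description precedes it below -/
import Mathlib

section
/- (Theorem 3, net consumption zone) Let Δ⁺ := Σ_i l_i(π⁺). If r < Δ⁺, then the consumption vector d* with d*_i = l_i(π⁺) for every i = 1,…,K is a maximizer of the surplus S(d) over d ∈ ∏_i [0, d̄_i], and it satisfies Σ_i d*_i > r (the prosumer is a net consumer). -/
open Set

/-- Pointwise maximization: under the clipping characterization, `l i π` maximizes
`y ↦ U y - π * y` over `[0, d̄]`. -/
lemma pointwise_max_aux {dbar : ℝ} (hdbar : 0 < dbar) {U L : ℝ → ℝ}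
    (hUconc : StrictConcaveOn ℝ (Icc 0 dbar) U)
    (hL : ∀ x ∈ Icc 0 dbar, HasDerivWithinAt U (L x) (Icc 0 dbar) x)
    {π x : ℝ} (hx : x ∈ Icc 0 dbar)
    (hA : ∀ y ∈ Icc 0 dbar, y < x → π ≤ L x)
    (hB : ∀ y ∈ Icc 0 dbar, x < y → L x ≤ π)
    {y : ℝ} (hy : y ∈ Icc 0 dbar) :
    U y - π * y ≤ U x - π * x := by
  rcases lt_trichotomy y x with h | h | h
  · have hslope := hUconc.concaveOn.le_slope_of_hasDerivWithinAt hy hx h (hL x hx)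
    rw [slope_def_field] at hslope
    have hxy : 0 < x - y := by linarith
    rw [le_div_iff₀ hxy] at hslope
    have hπL := hA y hy h
    nlinarith
  · rw [h]
  · have hslope := hUconc.concaveOn.slope_le_of_hasDerivWithinAt hx hy h (hL x hx)
    rw [slope_def_field] at hslope
    have hxy : 0 < y - x := by linarith
    rw [div_le_iff₀ hxy] at hslope
    have hπL := hB y hy h
    nlinarith

/-- **Theorem 3, net consumption zone.**
If `r < Δ⁺ := ∑ i, l i π⁺`, then `d*` with `d*_i = l_i(π⁺)` maximizes the prosumer
surplus `S` over `∏ i [0, d̄_i]`, and the prosumer is a net consumer: `∑ i d*_i > r`. -/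
theorem theorem3_net_consumption_zone
    (K : ℕ) (dbar : Fin K → ℝ) (hdbar : ∀ i, 0 < dbar i)
    (U : Fin K → ℝ → ℝ)
    (hUconc : ∀ i, StrictConcaveOn ℝ (Icc 0 (dbar i)) (U i))
    (hUmono : ∀ i, StrictMonoOn (U i) (Icc 0 (dbar i)))
    (hUzero : ∀ i, U i 0 = 0)
    -- `L i` is the (continuous) marginal utility `U_i'` on `[0, d̄_i]`
    (L : Fin K → ℝ → ℝ)
    (hL : ∀ i, ∀ x ∈ Icc 0 (dbar i), HasDerivWithinAt (U i) (L i x) (Icc 0 (dbar i)) x)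
    (hLcont : ∀ i, ContinuousOn (L i) (Icc 0 (dbar i)))
    -- `l i π = max {0, min {d̄_i, L_i⁻¹(π)}}`, characterized by clipping
    (l : Fin K → ℝ → ℝ)
    (hl_mem : ∀ i π, l i π ∈ Icc 0 (dbar i))
    (hl_hi : ∀ i π, π ≤ L i (dbar i) → l i π = dbar i)
    (hl_lo : ∀ i π, L i 0 ≤ π → l i π = 0)
    (hl_mid : ∀ i π, L i (dbar i) < π → π < L i 0 → L i (l i π) = π)
    -- NEM X prices with `π⁺ ≥ π⁻ > 0`
    (πp πm : ℝ) (hπ : πm ≤ πp) (hπm : 0 < πm)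
    -- renewable generation
    (r : ℝ) (hr : 0 ≤ r)
    -- prosumer surplus
    (S : (Fin K → ℝ) → ℝ)
    (hS : ∀ d, S d = ∑ i, U i (d i) -
      (πp * max (∑ i, d i - r) 0 - πm * max (-(∑ i, d i - r)) 0))
    -- net consumption zone
    (hzone : r < ∑ i, l i πp) :
    (∀ i, l i πp ∈ Icc 0 (dbar i)) ∧
      IsMaxOn S {d | ∀ i, d i ∈ Icc 0 (dbar i)} (fun i => l i πp) ∧
      r < ∑ i, l i πp := by
  refine ⟨fun i => hl_mem i πp, ?_, hzone⟩
  -- pointwise maximization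
  have key : ∀ i, ∀ y ∈ Icc 0 (dbar i),
      U i y - πp * y ≤ U i (l i πp) - πp * (l i πp) := by
    intro i y hy
    refine pointwise_max_aux (hdbar i) (hUconc i) (hL i) (hl_mem i πp) ?_ ?_ hy
    · intro z hz hzlt
      by_cases h1 : πp ≤ L i (dbar i)
      · rw [hl_hi i πp h1]; exact h1.trans_eq rfl
      · by_cases h2 : L i 0 ≤ πp
        · exfalso; rw [hl_lo i πp h2] at hzlt; exact absurd hz.1 (not_le.mpr hzlt)
        · push_neg at h1 h2
          exact (hl_mid i πp h1 h2).ge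
    · intro z hz hzlt
      by_cases h1 : πp ≤ L i (dbar i)
      · exfalso; rw [hl_hi i πp h1] at hzlt; exact absurd hz.2 (not_le.mpr hzlt)
      · by_cases h2 : L i 0 ≤ πp
        · rw [hl_lo i πp h2]; exact h2
        · push_neg at h1 h2
          exact (hl_mid i πp h1 h2).le
  intro d hd
  simp only [Set.mem_setOf_eq] at hd
  have hsum : ∑ i, (U i (d i) - πp * d i) ≤ ∑ i, (U i (l i πp) - πp * l i πp) :=
    Finset.sum_le_sum fun i _ => key i (d i) (hd i)
  rw [Finset.sum_sub_distrib, Finset.sum_sub_distrib, ← Finset.mul_sum, ← Finset.mul_sum] at hsum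
  simp only [IsMaxOn, IsMaxFilter, Filter.eventually_iff, Set.mem_setOf_eq]
  show S d ≤ S (fun i => l i πp)
  rw [hS d, hS (fun i => l i πp)]
  have hstar : ∑ i, l i πp - r > 0 := by linarith
  have hmax1 : max (∑ i, (fun i => l i πp) i - r) 0 = ∑ i, l i πp - r := by
    simp only []; exact max_eq_left hstar.le
  have hmax2 : max (-(∑ i, (fun i => l i πp) i - r)) 0 = 0 := by
    simp only []; exact max_eq_right (by linarith)
  rw [hmax1, hmax2]
  -- payment bound: πp * max z 0 - πm * max (-z) 0 ≥ πp * z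
  have hpay : πp * (∑ i, d i - r) ≤
      πp * max (∑ i, d i - r) 0 - πm * max (-(∑ i, d i - r)) 0 := by
    rcases le_or_gt 0 (∑ i, d i - r) with h | h
    · rw [max_eq_left h, max_eq_right (by linarith)]; ring_nf; rfl
    · rw [max_eq_right h.le, max_eq_left (by linarith)]
      nlinarith
  nlinarith [hsum]
end

section
/- (Theorem 3, net production zone) Let Δ⁻ := Σ_i l_i(π⁻). If r > Δ⁻, then the consumption vector d* with d*_i = l_i(π⁻) for every i = 1,…,K is a maximizer of the surplus S(d) over d ∈ ∏_i [0, d̄_i], and it satisfies Σ_i d*_i < r (the prosumer is a net producer). -/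
open Set

/-- Tangent line lies above a concave function. -/
lemma concave_tangent_le {S : Set ℝ} {f : ℝ → ℝ} {a f' : ℝ}
    (hf : ConcaveOn ℝ S f) (ha : a ∈ S) (hd : HasDerivWithinAt f f' S a)
    {x : ℝ} (hx : x ∈ S) : f x ≤ f a + f' * (x - a) := by
  rcases lt_trichotomy x a with h | rfl | h
  · have := hf.le_slope_of_hasDerivWithinAt hx ha h hd
    rw [slope_def_field, le_div_iff₀ (by linarith : (0:ℝ) < a - x)] at this
    nlinarith
  · simp
  · have := hf.slope_le_of_hasDerivWithinAt ha hx h hd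
    rw [slope_def_field, div_le_iff₀ (by linarith : (0:ℝ) < x - a)] at this
    nlinarith

/-- **Theorem 3, net production zone.**
If `r > Δ⁻ := ∑ i, l i π⁻`, then `d*` with `d*_i = l_i(π⁻)` maximizes the prosumer
surplus `S` over `∏ i [0, d̄_i]`, and the prosumer is a net producer: `∑ i d*_i < r`. -/
theorem theorem3_net_production_zone
    (K : ℕ) (dbar : Fin K → ℝ) (hdbar : ∀ i, 0 < dbar i)
    (U : Fin K → ℝ → ℝ)
    (hUconc : ∀ i, StrictConcaveOn ℝ (Icc 0 (dbar i)) (U i))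
    (hUmono : ∀ i, StrictMonoOn (U i) (Icc 0 (dbar i)))
    (hUzero : ∀ i, U i 0 = 0)
    -- `L i` is the (continuous) marginal utility `U_i'` on `[0, d̄_i]`
    (L : Fin K → ℝ → ℝ)
    (hL : ∀ i, ∀ x ∈ Icc 0 (dbar i), HasDerivWithinAt (U i) (L i x) (Icc 0 (dbar i)) x)
    (hLcont : ∀ i, ContinuousOn (L i) (Icc 0 (dbar i)))
    -- `l i π = max {0, min {d̄_i, L_i⁻¹(π)}}`, characterized by clipping
    (l : Fin K → ℝ → ℝ)
    (hl_mem : ∀ i π, l i π ∈ Icc 0 (dbar i))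
    (hl_hi : ∀ i π, π ≤ L i (dbar i) → l i π = dbar i)
    (hl_lo : ∀ i π, L i 0 ≤ π → l i π = 0)
    (hl_mid : ∀ i π, L i (dbar i) < π → π < L i 0 → L i (l i π) = π)
    -- NEM X prices with `π⁺ ≥ π⁻ > 0`
    (πp πm : ℝ) (hπ : πm ≤ πp) (hπm : 0 < πm)
    -- renewable generation
    (r : ℝ) (hr : 0 ≤ r)
    -- prosumer surplus
    (S : (Fin K → ℝ) → ℝ)
    (hS : ∀ d, S d = ∑ i, U i (d i) -
      (πp * max (∑ i, d i - r) 0 - πm * max (-(∑ i, d i - r)) 0))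
    -- net production zone
    (hzone : (∑ i, l i πm) < r) :
    (∀ i, l i πm ∈ Icc 0 (dbar i)) ∧
      IsMaxOn S {d | ∀ i, d i ∈ Icc 0 (dbar i)} (fun i => l i πm) ∧
      (∑ i, l i πm) < r := by
  refine ⟨fun i => hl_mem i πm, ?_, hzone⟩
  -- per-coordinate optimality: `l i πm` maximizes `U i x - πm * x` on `[0, d̄_i]`
  have key : ∀ i, ∀ x ∈ Icc 0 (dbar i),
      U i x - πm * x ≤ U i (l i πm) - πm * (l i πm) := by
    intro i x hx
    set a := l i πm with ha
    have hamem : a ∈ Icc 0 (dbar i) := hl_mem i πm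
    have htan := concave_tangent_le (hUconc i).concaveOn hamem (hL i a hamem) hx
    rcases le_or_gt πm (L i (dbar i)) with hcase | hcase
    · -- a = dbar i, so x ≤ a and L i a ≥ πm
      have haeq : a = dbar i := hl_hi i πm hcase
      have hxa : x - a ≤ 0 := by rw [haeq]; linarith [hx.2]
      have hLa : πm ≤ L i a := by rw [haeq]; exact hcase
      nlinarith
    · rcases le_or_gt (L i 0) πm with hcase2 | hcase2
      · -- a = 0, so x ≥ a and L i a ≤ πm
        have haeq : a = 0 := hl_lo i πm hcase2
        have hxa : 0 ≤ x - a := by rw [haeq]; linarith [hx.1]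
        have hLa : L i a ≤ πm := by rw [haeq]; exact hcase2
        nlinarith
      · have hLa : L i a = πm := hl_mid i πm hcase hcase2
        rw [hLa] at htan
        linarith
  intro d hd
  simp only [Set.mem_setOf_eq] at hd ⊢
  -- P(z) ≥ πm * z for every z
  have hP : ∀ z : ℝ, πm * z ≤ πp * max z 0 - πm * max (-z) 0 := by
    intro z
    rcases le_or_gt 0 z with hz | hz
    · rw [max_eq_left hz, max_eq_right (by linarith)]
      nlinarith
    · rw [max_eq_right hz.le, max_eq_left (by linarith)]
      ring_nf
      nlinarith
  have hstar : ∑ i, l i πm - r < 0 := by linarith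
  have hSstar : S (fun i => l i πm) = ∑ i, U i (l i πm) - πm * (∑ i, l i πm - r) := by
    rw [hS]
    rw [max_eq_right hstar.le, max_eq_left (by linarith)]
    ring
  have hsum : ∑ i, (U i (d i) - πm * d i) ≤ ∑ i, (U i (l i πm) - πm * (l i πm)) :=
    Finset.sum_le_sum fun i _ => key i (d i) (hd i)
  rw [hS d, hSstar]
  have h1 : πm * (∑ i, d i - r) ≤ πp * max (∑ i, d i - r) 0 - πm * max (-(∑ i, d i - r)) 0 :=
    hP _
  have h2 : ∑ i, U i (d i) - πm * (∑ i, d i) ≤ ∑ i, U i (l i πm) - πm * (∑ i, l i πm) := by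
    rw [Finset.sum_sub_distrib, Finset.sum_sub_distrib, ← Finset.mul_sum, ← Finset.mul_sum] at hsum
    exact hsum
  linarith
end

section
/- (Proposition 2, sandwich bound) For every time t ∈ {0,…,T−1}, every state (y, r, π_t) with y ≥ 0, and every ε > 0, the value function satisfies −γ·ε ≤ V_t(y + ε, r, π_t) − V_t(y, r, π_t) ≤ −π_off⁻·ε. In particular, V_t is strictly decreasing in the remaining EV charging demand y. -/
open MeasureTheory Set

/-- NEM X payment for net consumption `z` with buy price `pp` and sell price `pm`. -/
noncomputable def NEMPayment (pp pm z : ℝ) : ℝ := pp * max z 0 - pm * max (-z) 0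

/-- The superdifferential of a function `f : ℝ → ℝ` (viewed as a concave function
on `[0, ∞)`) at a point `y`. -/
def superdiff (f : ℝ → ℝ) (y : ℝ) : Set ℝ :=
  {s | ∀ z, 0 ≤ z → f z ≤ f y + s * (z - y)}

/-- Data of the EV-charging / flexible-consumption dynamic program over horizon
`{0, …, T-1}` with `K` flexible loads, under NEM time-of-use prices. -/
structure EVModel (K T : ℕ) (Ω : Type) [MeasurableSpace Ω] where
  /-- underlying probability measure -/
  μ : Measure Ω
  prob : IsProbabilityMeasure μ
  /-- consumption upper bounds -/
  dbar : Fin K → ℝ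
  dbar_pos : ∀ i, 0 < dbar i
  /-- device utility functions -/
  U : Fin K → ℝ → ℝ
  U_strictConcave : ∀ i, StrictConcaveOn ℝ (Icc 0 (dbar i)) (U i)
  U_strictMono : ∀ i, StrictMonoOn (U i) (Icc 0 (dbar i))
  U_diff : ∀ i, ∀ x ∈ Icc 0 (dbar i), DifferentiableWithinAt ℝ (U i) (Icc 0 (dbar i)) x
  U_contDeriv : ∀ i, ContinuousOn (fun x => derivWithin (U i) (Icc 0 (dbar i)) x) (Icc 0 (dbar i))
  U_zero : ∀ i, U i 0 = 0
  /-- renewable processes -/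
  r : ℕ → Ω → ℝ
  r_meas : ∀ t, Measurable (r t)
  r_nonneg : ∀ t ω, 0 ≤ r t ω
  r_int : ∀ t, Integrable (r t) μ
  r_indep : ProbabilityTheory.iIndepFun r μ
  /-- time-of-use buy prices `π_t⁺` -/
  pip : ℕ → ℝ
  /-- time-of-use sell prices `π_t⁻` -/
  pim : ℕ → ℝ
  /-- maximal per-period EV charge -/
  vbar : ℝ
  vbar_pos : 0 < vbar
  /-- per-unit penalty for unmet EV demand at the horizon -/
  γ : ℝ
  /-- `π_off⁻ = min_t π_t⁻` -/
  pioff : ℝ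
  pioff_le : ∀ t < T, pioff ≤ pim t
  pioff_attained : ∃ t < T, pioff = pim t
  /-- assumption A1 -/
  A1 : ∀ t < T, 0 < pim t ∧ pim t ≤ pip t ∧ pip t < γ

namespace EVModel

variable {K T : ℕ} {Ω : Type} [MeasurableSpace Ω]

/-- Stage reward `g_t(x_t, v, d)`. -/
noncomputable def stage (M : EVModel K T Ω) (t : ℕ) (rt v : ℝ) (d : Fin K → ℝ) : ℝ :=
  ∑ i, M.U i (d i) - NEMPayment (M.pip t) (M.pim t) (v + ∑ i, d i - rt)

/-- Feasible decisions `(v, d)` given remaining demand `y`. -/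
def feas (M : EVModel K T Ω) (y : ℝ) : Set (ℝ × (Fin K → ℝ)) :=
  {p | p.1 ∈ Icc 0 (min M.vbar y) ∧ ∀ i, p.2 i ∈ Icc 0 (M.dbar i)}

/-- Value function indexed by `k = T - 1 - t`, the number of remaining periods after
the current one. -/
noncomputable def W (M : EVModel K T Ω) : ℕ → ℝ → ℝ → ℝ
  | 0 => fun y rt => sSup ((fun p : ℝ × (Fin K → ℝ) =>
      M.stage (T - 1) rt p.1 p.2 - M.γ * (y - p.1)) '' M.feas y)
  | (k + 1) => fun y rt => sSup ((fun p : ℝ × (Fin K → ℝ) =>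
      M.stage (T - 2 - k) rt p.1 p.2 +
        ∫ ω, M.W k (y - p.1) (M.r (T - 1 - k) ω) ∂M.μ) '' M.feas y)

/-- Value function `V_t(y, r_t)` (the price argument is determined by `t`). -/
noncomputable def V (M : EVModel K T Ω) (t : ℕ) (y rt : ℝ) : ℝ := M.W (T - 1 - t) y rt

/-- Expected value function `V̄_t(y) = E[V_t(y, r_t, π_t)]`. -/
noncomputable def Vbar (M : EVModel K T Ω) (t : ℕ) (y : ℝ) : ℝ := ∫ ω, M.V t y (M.r t ω) ∂M.μ

/-- Objective of the Bellman equation at time `t` in state `(y, rt)`. -/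
noncomputable def bellObj (M : EVModel K T Ω) (t : ℕ) (y rt : ℝ) (p : ℝ × (Fin K → ℝ)) : ℝ :=
  if t = T - 1 then M.stage t rt p.1 p.2 - M.γ * (y - p.1)
  else M.stage t rt p.1 p.2 + ∫ ω, M.V (t + 1) (y - p.1) (M.r (t + 1) ω) ∂M.μ

/-- `(v, d)` is an optimal solution of the Bellman equation at time `t`. -/
def IsBellmanOpt (M : EVModel K T Ω) (t : ℕ) (y rt : ℝ) (p : ℝ × (Fin K → ℝ)) : Prop :=
  p ∈ M.feas y ∧ ∀ q ∈ M.feas y, M.bellObj t y rt q ≤ M.bellObj t y rt p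

/-- Superdifferential `h_t` of the concave expected value function `V̄_t`. -/
noncomputable def h (M : EVModel K T Ω) (t : ℕ) (y : ℝ) : Set ℝ := superdiff (M.Vbar t) y

end EVModel

/-!
Backward induction over the horizon. At the horizon the marginal cost of demand is the penalty
`γ`. In earlier periods, a decision feasible for demand `y` stays feasible for `y + ε` and only
the continuation value changes, by at most `γ ε`. Conversely, a decision `(v, d)` for `y + ε` is
matched by `(min v y, d)` for `y`: the charge removed from this period is sold back at price at
least `π_off⁻`, and the extra demand it leaves for later periods costs at least `π_off⁻` per unit
by induction. The continuation values are integrable because each value function is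
`γ`-Lipschitz in the renewable output.
-/

theorem csSup_image_add_le_csSup_image {ι κ : Type*} {s : Set ι} {t : Set κ} {f : ι → ℝ}
    {g : κ → ℝ} (hs : s.Nonempty) (hg : BddAbove (g '' t)) {c : ℝ}
    (h : ∀ i ∈ s, ∃ j ∈ t, f i + c ≤ g j) : sSup (f '' s) + c ≤ sSup (g '' t) := by
  rw [← le_sub_iff_add_le]
  refine csSup_le (hs.image f) ?_
  rintro _ ⟨i, hi, rfl⟩
  obtain ⟨j, hj, hij⟩ := h i hi
  exact le_sub_iff_add_le.2 (hij.trans (le_csSup hg (mem_image_of_mem g hj)))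

theorem LipschitzWith.integrable_comp {α E F : Type*} [MeasurableSpace α] {μ : Measure α}
    [IsFiniteMeasure μ] [NormedAddCommGroup E] [NormedAddCommGroup F] {L : NNReal} {g : E → F}
    (hg : LipschitzWith L g) {X : α → E} (hX : Integrable X μ) :
    Integrable (fun ω => g (X ω)) μ := by
  refine Integrable.mono' ((integrable_const ‖g 0‖).add (hX.norm.const_mul L))
    (hg.continuous.comp_aestronglyMeasurable hX.1) (Filter.Eventually.of_forall fun ω => ?_)
  have hsub := hg.norm_sub_le (X ω) 0
  rw [sub_zero] at hsub
  calc ‖g (X ω)‖ ≤ ‖g 0‖ + ‖g (X ω) - g 0‖ := norm_le_insert' _ _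
    _ ≤ ‖g 0‖ + L * ‖X ω‖ := by gcongr

section NEMPayment

variable {pp pm : ℝ}

theorem NEMPayment_eq (z : ℝ) : NEMPayment pp pm z = pm * z + (pp - pm) * max z 0 := by
  rcases le_total z 0 with h | h
  · rw [NEMPayment, max_eq_right h, max_eq_left (neg_nonneg.2 h)]; ring
  · rw [NEMPayment, max_eq_left h, max_eq_right (neg_nonpos.2 h)]; ring

theorem mul_le_NEMPayment (h : pm ≤ pp) (z : ℝ) : pm * z ≤ NEMPayment pp pm z := by
  rw [NEMPayment_eq]
  nlinarith [le_max_right z 0]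

theorem mul_sub_le_NEMPayment_sub (h : pm ≤ pp) {a b : ℝ} (hab : a ≤ b) :
    pm * (b - a) ≤ NEMPayment pp pm b - NEMPayment pp pm a := by
  rw [NEMPayment_eq, NEMPayment_eq]
  nlinarith [max_le_max_right 0 hab]

theorem NEMPayment_sub_le_mul_sub (h : pm ≤ pp) {a b : ℝ} (hab : a ≤ b) :
    NEMPayment pp pm b - NEMPayment pp pm a ≤ pp * (b - a) := by
  have hmax : max b 0 - max a 0 ≤ b - a := by
    rcases le_total a 0 with ha | ha
    · rw [max_eq_right ha, sub_zero]; exact max_le (by linarith) (by linarith)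
    · rw [max_eq_left ha, max_eq_left (ha.trans hab)]
  rw [NEMPayment_eq, NEMPayment_eq]
  nlinarith

theorem NEMPayment_le_add_mul (hpm : 0 ≤ pm) (h : pm ≤ pp) (x y : ℝ) :
    NEMPayment pp pm x ≤ NEMPayment pp pm y + pp * |x - y| := by
  rcases le_total x y with hxy | hxy
  · have := mul_sub_le_NEMPayment_sub h hxy
    nlinarith [abs_nonneg (x - y), mul_nonneg hpm (sub_nonneg.2 hxy)]
  · have := NEMPayment_sub_le_mul_sub h hxy
    rw [abs_of_nonneg (sub_nonneg.2 hxy)]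
    linarith

end NEMPayment

def DecreasesAtRate (a b : ℝ) (f : ℝ → ℝ) : Prop :=
  ∀ ⦃u u' : ℝ⦄, 0 ≤ u → u ≤ u' → a * (u' - u) ≤ f u - f u' ∧ f u - f u' ≤ b * (u' - u)

namespace DecreasesAtRate

variable {a b : ℝ} {f : ℝ → ℝ}

theorem antitoneOn (h : DecreasesAtRate a b f) (ha : 0 ≤ a) : AntitoneOn f (Ici 0) :=
  fun _ hu _ _ huu' => sub_nonneg.1 ((mul_nonneg ha (sub_nonneg.2 huu')).trans (h hu huu').1)

theorem strictAntiOn (h : DecreasesAtRate a b f) (ha : 0 < a) : StrictAntiOn f (Ici 0) :=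
  fun _ hu _ _ huu' => sub_pos.1 ((mul_pos ha (sub_pos.2 huu')).trans_le (h hu huu'.le).1)

theorem integral {α : Type*} [MeasurableSpace α] {μ : Measure α} [IsProbabilityMeasure μ]
    {F : ℝ → α → ℝ} (hF : ∀ ω, DecreasesAtRate a b (F · ω))
    (hint : ∀ u, 0 ≤ u → Integrable (F u) μ) : DecreasesAtRate a b (fun u => ∫ ω, F u ω ∂μ) := by
  intro u u' hu huu'
  have hu' := hu.trans huu'
  rw [← integral_sub (hint u hu) (hint u' hu')]
  constructor
  · calc a * (u' - u) = ∫ _, a * (u' - u) ∂μ := by simp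
      _ ≤ _ := integral_mono (integrable_const _) ((hint u hu).sub (hint u' hu'))
          fun ω => (hF ω hu huu').1
  · calc _ ≤ ∫ _, b * (u' - u) ∂μ :=
          integral_mono ((hint u hu).sub (hint u' hu')) (integrable_const _)
            fun ω => (hF ω hu huu').2
      _ = b * (u' - u) := by simp

end DecreasesAtRate

theorem decreasesAtRate_neg_mul {a b : ℝ} (hab : a ≤ b) : DecreasesAtRate a b (fun u => -b * u) :=
  fun u u' _ huu' => ⟨by nlinarith, by linarith⟩

namespace EVModel

variable {K T : ℕ} {Ω : Type} [MeasurableSpace Ω] (M : EVModel K T Ω)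

include M in
theorem T_pos : 0 < T := by
  obtain ⟨t, ht, -⟩ := M.pioff_attained
  omega

theorem pioff_pos : 0 < M.pioff := by
  obtain ⟨t, ht, he⟩ := M.pioff_attained
  exact he ▸ (M.A1 t ht).1

theorem pioff_le_gamma : M.pioff ≤ M.γ := by
  obtain ⟨t, ht, he⟩ := M.pioff_attained
  obtain ⟨-, h₁, h₂⟩ := M.A1 t ht
  linarith

theorem feas_nonempty {y : ℝ} (hy : 0 ≤ y) : (M.feas y).Nonempty :=
  ⟨(0, 0), ⟨le_rfl, le_min M.vbar_pos.le hy⟩, fun i => ⟨le_rfl, (M.dbar_pos i).le⟩⟩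

theorem feas_mono {y y' : ℝ} (h : y ≤ y') : M.feas y ⊆ M.feas y' :=
  fun _ ⟨⟨hv₀, hv⟩, hd⟩ => ⟨⟨hv₀, hv.trans (min_le_min le_rfl h)⟩, hd⟩

theorem fst_le_of_mem_feas {y : ℝ} {p : ℝ × (Fin K → ℝ)} (hp : p ∈ M.feas y) : p.1 ≤ y :=
  hp.1.2.trans (min_le_right _ _)

theorem min_fst_mem_feas {y y' : ℝ} (hy : 0 ≤ y) {p : ℝ × (Fin K → ℝ)} (hp : p ∈ M.feas y') :
    (min p.1 y, p.2) ∈ M.feas y :=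
  ⟨⟨le_min hp.1.1 hy, min_le_min_right y (hp.1.2.trans (min_le_left _ _))⟩, hp.2⟩

variable {s : ℕ}

theorem stage_le (hs : s < T) {rt v : ℝ} {d : Fin K → ℝ} (hv : 0 ≤ v)
    (hd : ∀ i, d i ∈ Icc 0 (M.dbar i)) :
    M.stage s rt v d ≤ ∑ i, M.U i (M.dbar i) + M.pim s * rt := by
  obtain ⟨hpm₀, hpm, -⟩ := M.A1 s hs
  have hU : ∑ i, M.U i (d i) ≤ ∑ i, M.U i (M.dbar i) := Finset.sum_le_sum fun i _ =>
    (M.U_strictMono i).monotoneOn (hd i) ⟨(M.dbar_pos i).le, le_rfl⟩ (hd i).2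
  have hP := mul_le_NEMPayment hpm (v + ∑ i, d i - rt)
  have hd₀ : 0 ≤ ∑ i, d i := Finset.sum_nonneg fun i _ => (hd i).1
  rw [stage]
  nlinarith

theorem stage_le_add_mul (hs : s < T) (ra rb v : ℝ) (d : Fin K → ℝ) :
    M.stage s ra v d ≤ M.stage s rb v d + M.γ * |ra - rb| := by
  obtain ⟨hpm₀, hpm, hpp⟩ := M.A1 s hs
  have hP := NEMPayment_le_add_mul hpm₀.le hpm (v + ∑ i, d i - rb) (v + ∑ i, d i - ra)
  rw [show v + ∑ i, d i - rb - (v + ∑ i, d i - ra) = ra - rb by ring] at hP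
  rw [stage, stage]
  nlinarith [abs_nonneg (ra - rb)]

theorem mul_sub_le_stage_sub (hs : s < T) (rt : ℝ) {v' v : ℝ} (hv : v' ≤ v) (d : Fin K → ℝ) :
    M.pioff * (v - v') ≤ M.stage s rt v' d - M.stage s rt v d := by
  have hP := mul_sub_le_NEMPayment_sub (M.A1 s hs).2.1
    (show v' + ∑ i, d i - rt ≤ v + ∑ i, d i - rt by linarith)
  rw [show v + ∑ i, d i - rt - (v' + ∑ i, d i - rt) = v - v' by ring] at hP
  rw [stage, stage]
  nlinarith [M.pioff_le s hs]

/-- `C` values the demand left after this period. -/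
noncomputable def qValue (s : ℕ) (C : ℝ → ℝ) (y rt : ℝ) (p : ℝ × (Fin K → ℝ)) : ℝ :=
  M.stage s rt p.1 p.2 + C (y - p.1)

noncomputable def bellman (s : ℕ) (C : ℝ → ℝ) (y rt : ℝ) : ℝ :=
  sSup (M.qValue s C y rt '' M.feas y)

theorem W_zero : M.W 0 = M.bellman (T - 1) (fun u => -M.γ * u) := by
  funext y rt
  simp only [W, bellman]
  unfold qValue
  simp only [neg_mul, ← sub_eq_add_neg]

theorem W_succ (k : ℕ) :
    M.W (k + 1) = M.bellman (T - 2 - k) (fun u => ∫ ω, M.W k u (M.r (T - 1 - k) ω) ∂M.μ) :=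
  rfl

variable {C : ℝ → ℝ}

theorem bddAbove_qValue_image (hs : s < T) (hC : AntitoneOn C (Ici 0)) (y rt : ℝ) :
    BddAbove (M.qValue s C y rt '' M.feas y) := by
  refine ⟨∑ i, M.U i (M.dbar i) + M.pim s * rt + C 0, ?_⟩
  rintro _ ⟨p, hp, rfl⟩
  have hv := M.fst_le_of_mem_feas hp
  have hC' : C (y - p.1) ≤ C 0 := hC (mem_Ici.2 le_rfl) (sub_nonneg.2 hv) (sub_nonneg.2 hv)
  have := M.stage_le hs (rt := rt) hp.1.1 hp.2
  rw [qValue]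
  linarith

theorem lipschitzWith_bellman (hs : s < T) (hC : AntitoneOn C (Ici 0)) {y : ℝ} (hy : 0 ≤ y) :
    LipschitzWith M.γ.toNNReal (M.bellman s C y) := by
  refine LipschitzWith.of_le_add_mul' _ fun ra rb => ?_
  have := csSup_image_add_le_csSup_image (M.feas_nonempty hy) (M.bddAbove_qValue_image hs hC y rb)
    (f := M.qValue s C y ra) (c := -(M.γ * |ra - rb|)) fun p hp =>
      ⟨p, hp, by simp only [qValue]; linarith [M.stage_le_add_mul hs ra rb p.1 p.2]⟩
  rw [Real.dist_eq, bellman, bellman]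
  linarith

section DecreasesAtRate

variable (hs : s < T) (hC : DecreasesAtRate M.pioff M.γ C) {y y' : ℝ} (hy : 0 ≤ y) (hyy' : y ≤ y')
  (rt : ℝ)
include hs hC hy hyy'

theorem bellman_sub_bellman_le :
    M.bellman s C y rt - M.bellman s C y' rt ≤ M.γ * (y' - y) := by
  have hbdd := M.bddAbove_qValue_image hs (hC.antitoneOn M.pioff_pos.le) y' rt
  have := csSup_image_add_le_csSup_image (M.feas_nonempty hy) hbdd (f := M.qValue s C y rt)
    (c := -(M.γ * (y' - y)))
    fun p hp => by
      refine ⟨p, M.feas_mono hyy' hp, ?_⟩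
      have hv := M.fst_le_of_mem_feas hp
      have := (hC (sub_nonneg.2 hv) (sub_le_sub_right hyy' p.1)).2
      simp only [qValue]
      linarith
  rw [bellman, bellman]
  linarith

theorem mul_sub_le_bellman_sub :
    M.pioff * (y' - y) ≤ M.bellman s C y rt - M.bellman s C y' rt := by
  have hbdd := M.bddAbove_qValue_image hs (hC.antitoneOn M.pioff_pos.le) y rt
  have := csSup_image_add_le_csSup_image (M.feas_nonempty (hy.trans hyy')) hbdd
    (f := M.qValue s C y' rt) (c := M.pioff * (y' - y)) fun p hp => by
      refine ⟨(min p.1 y, p.2), M.min_fst_mem_feas hy hp, ?_⟩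
      have hv := M.fst_le_of_mem_feas hp
      have hcut : p.1 - min p.1 y ≤ y' - y := by
        rcases le_total p.1 y with h | h
        · rw [min_eq_left h]; linarith
        · rw [min_eq_right h]; linarith
      have hstage := M.mul_sub_le_stage_sub hs rt (min_le_left p.1 y) p.2
      have hcont := (hC (sub_nonneg.2 (min_le_right p.1 y)) (show y - min p.1 y ≤ y' - p.1 by
        linarith)).1
      simp only [qValue]
      linarith
  rw [bellman, bellman]
  linarith

end DecreasesAtRate

theorem bellman_decreasesAtRate (hs : s < T) (hC : DecreasesAtRate M.pioff M.γ C) (rt : ℝ) :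
    DecreasesAtRate M.pioff M.γ (fun y => M.bellman s C y rt) := fun _ _ hy hyy' =>
  ⟨M.mul_sub_le_bellman_sub hs hC hy hyy' rt, M.bellman_sub_bellman_le hs hC hy hyy' rt⟩

theorem W_decreasesAtRate_and_lipschitzWith (k : ℕ) :
    (∀ rt, DecreasesAtRate M.pioff M.γ (fun y => M.W k y rt)) ∧
      ∀ y, 0 ≤ y → LipschitzWith M.γ.toNNReal (M.W k y) := by
  have hT := M.T_pos
  induction k with
  | zero =>
    have hC := decreasesAtRate_neg_mul M.pioff_le_gamma
    rw [W_zero]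
    exact ⟨M.bellman_decreasesAtRate (by omega) hC,
      fun y => M.lipschitzWith_bellman (by omega) (hC.antitoneOn M.pioff_pos.le)⟩
  | succ k ih =>
    have := M.prob
    have hC : DecreasesAtRate M.pioff M.γ (fun u => ∫ ω, M.W k u (M.r (T - 1 - k) ω) ∂M.μ) :=
      DecreasesAtRate.integral (fun ω => ih.1 _)
        fun u hu => (ih.2 u hu).integrable_comp (M.r_int _)
    rw [W_succ]
    exact ⟨M.bellman_decreasesAtRate (by omega) hC,
      fun y => M.lipschitzWith_bellman (by omega) (hC.antitoneOn M.pioff_pos.le)⟩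

end EVModel

theorem prop2_sandwich_general (K T : ℕ) (Ω : Type) [MeasurableSpace Ω]
    (M : EVModel K T Ω) (t : ℕ) (rt : ℝ) :
    (∀ y : ℝ, 0 ≤ y → ∀ ε : ℝ, 0 < ε →
      -M.γ * ε ≤ M.V t (y + ε) rt - M.V t y rt ∧
        M.V t (y + ε) rt - M.V t y rt ≤ -M.pioff * ε) ∧
      StrictAntiOn (fun y => M.V t y rt) (Set.Ici 0) := by
  have hV : DecreasesAtRate M.pioff M.γ (fun y => M.V t y rt) :=
    (M.W_decreasesAtRate_and_lipschitzWith (T - 1 - t)).1 rt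
  refine ⟨fun y hy ε hε => ?_, hV.strictAntiOn M.pioff_pos⟩
  obtain ⟨hlow, hup⟩ := hV hy (le_add_of_nonneg_right hε.le)
  rw [add_sub_cancel_left] at hlow hup
  constructor <;> linarith

/-- **Proposition 2 (sandwich bound).**
For every `t ∈ {0, …, T-1}`, state `(y, r, π_t)` with `y ≥ 0` and every `ε > 0`,
`-γ ε ≤ V_t(y + ε, r, π_t) - V_t(y, r, π_t) ≤ -π_off⁻ ε`.  In particular `V_t` is
strictly decreasing in the remaining EV charging demand `y`. -/
theorem prop2_sandwich (K T : ℕ) (Ω : Type) [MeasurableSpace Ω]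
    (M : EVModel K T Ω) (t : ℕ) (ht : t < T) (rt : ℝ) (hrt : 0 ≤ rt) :
    (∀ y : ℝ, 0 ≤ y → ∀ ε : ℝ, 0 < ε →
      -M.γ * ε ≤ M.V t (y + ε) rt - M.V t y rt ∧
        M.V t (y + ε) rt - M.V t y rt ≤ -M.pioff * ε) ∧
      StrictAntiOn (fun y => M.V t y rt) (Set.Ici 0) :=
  prop2_sandwich_general K T Ω M t rt
end
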